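/- arXiv:2307.07309 — 3 statements merged into one kernel-verified Lean document; each statement's English description precedes it below -/
import Mathlib

section
/- Let G be an étale Hausdorff groupoid that is the union of a nested increasing sequence of open subgroupoids G_n with closure(G_n) ⊆ G_{n+1}. Then the dynamic asymptotic dimension of G is at most the liminf of the dynamic asymptotic dimensions of the G_n. -/
class GroupoidLike (G : Type*) where
  src : G → G
  rng : G → G
  inv : G → G
  mul : G → G → G

open GroupoidLike

def units (G : Type*) [GroupoidLike G] : Set G := {g | src g = g}

class EtaleGroupoid (G : Type*) [TopologicalSpace G] [GroupoidLike G] : Prop where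
  cont_src : Continuous (src : G → G)
  cont_rng : Continuous (rng : G → G)
  cont_inv : Continuous (inv : G → G)
  localHomeo_src : IsLocalHomeomorph (src : G → G)
  localHomeo_rng : IsLocalHomeomorph (rng : G → G)
  src_src : ∀ g : G, src (src g) = src g
  rng_src : ∀ g : G, rng (src g) = src g
  src_rng : ∀ g : G, src (rng g) = rng g
  rng_rng : ∀ g : G, rng (rng g) = rng g
  src_inv : ∀ g : G, src (inv g) = rng g
  rng_inv : ∀ g : G, rng (inv g) = src g
  inv_inv : ∀ g : G, inv (inv g) = g
  src_mul : ∀ g h : G, src g = rng h → src (mul g h) = src h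
  rng_mul : ∀ g h : G, src g = rng h → rng (mul g h) = rng g
  mul_assoc : ∀ g h k : G, src g = rng h → src h = rng k →
    mul (mul g h) k = mul g (mul h k)
  inv_mul : ∀ g : G, mul (inv g) g = src g
  mul_inv : ∀ g : G, mul g (inv g) = rng g
  mul_unit : ∀ g : G, mul g (src g) = g
  unit_mul : ∀ g : G, mul (rng g) g = g
  inv_mul_rev : ∀ g h : G, src g = rng h → inv (mul g h) = mul (inv h) (inv g)

section GpdDefs

variable {G : Type*} [GroupoidLike G]

/-- The restriction `G|_A = {g : s(g), r(g) ∈ A}`. -/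
def restrict (A : Set G) : Set G := {g | src g ∈ A ∧ rng g ∈ A}

/-- Membership in the subgroupoid generated by `S`. -/
inductive gen (S : Set G) : G → Prop
  | base {g : G} : g ∈ S → gen S g
  | inv {g : G} : gen S g → gen S (GroupoidLike.inv g)
  | mul {g h : G} : gen S g → gen S h → src g = rng h → gen S (GroupoidLike.mul g h)

/-- The subgroupoid generated by `S`, as a set. -/
def Gen (S : Set G) : Set G := {g | gen S g}

/-- Product of two subsets of a groupoid (composable products only). -/
def setMul (K L : Set G) : Set G :=
  {x | ∃ g ∈ K, ∃ h ∈ L, src g = rng h ∧ x = GroupoidLike.mul g h}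

/-- Powers of a subset under groupoid multiplication. -/
def spow (K : Set G) : ℕ → Set G
  | 0 => units G
  | 1 => K
  | (n + 2) => setMul K (spow K (n + 1))

/-- A subset of `G` that is a subgroupoid. -/
def IsSubgroupoid (S : Set G) : Prop :=
  (∀ g ∈ S, GroupoidLike.inv g ∈ S) ∧ (∀ g ∈ S, src g ∈ S) ∧ (∀ g ∈ S, rng g ∈ S) ∧
    ∀ g h : G, g ∈ S → h ∈ S → src g = rng h → GroupoidLike.mul g h ∈ S

variable [TopologicalSpace G]

/-- `K` belongs to `𝒪_c(G)`: open, relatively compact, and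
`K = K ∪ K⁻¹ ∪ s(K) ∪ r(K)`. -/
def memOc (K : Set G) : Prop :=
  IsOpen K ∧ IsCompact (closure K) ∧ GroupoidLike.inv '' K ⊆ K ∧
    src '' K ⊆ K ∧ rng '' K ⊆ K

/-- The (open) subgroupoid with underlying set `S ⊆ G` has dynamic asymptotic dimension
at most `d` (all notions taken relative to the subspace `S`). -/
def dadLEOn (S : Set G) (d : ℕ) : Prop :=
  ∀ K : Set G, K ⊆ S → (∃ O : Set G, IsOpen O ∧ K = O ∩ S) →
    IsCompact (closure K ∩ S) →
    ∃ U : Fin (d + 1) → Set G,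
      (∀ i, (∃ O : Set G, IsOpen O ∧ U i = O ∩ S) ∧ U i ⊆ units G ∩ S) ∧
      (src '' K ∪ rng '' K) ⊆ (⋃ i, U i) ∧
      ∀ i, IsCompact (closure (Gen (K ∩ restrict (U i))) ∩ S)

/-- The dynamic asymptotic dimension of the subgroupoid `S ⊆ G`, as an extended natural
number (`⊤` if no finite bound exists). -/
noncomputable def dadOn (S : Set G) : ℕ∞ :=
  sInf {e : ℕ∞ | ∃ d : ℕ, e = (d : ℕ∞) ∧ dadLEOn S d}

end GpdDefs

/-- The dynamic asymptotic dimension of `G`. -/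
noncomputable def dad (G : Type*) [TopologicalSpace G] [GroupoidLike G] : ℕ∞ :=
  dadOn (Set.univ : Set G)

/-!
A relatively compact open `K ⊆ G` has compact closure, so it lies in one of the increasing
open `Gₙ`, and then in `Gₙ` for arbitrarily large `n`, in particular for one with
`dad Gₙ ≤ d`. The cover that `Gₙ` provides for `K` also works in `G`: each generated
subgroupoid lies in `Gₙ`, and its closure relative to `Gₙ` is compact, hence closed in the
Hausdorff space `G`, so it is already its closure in `G`.
-/

section Subgroupoids

variable {G : Type*} [GroupoidLike G]

theorem IsSubgroupoid.Gen_subset {S T : Set G} (hT : IsSubgroupoid T) (h : S ⊆ T) :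
    Gen S ⊆ T := by
  intro g hg
  induction hg with
  | base hg => exact h hg
  | inv _ ih => exact hT.1 _ ih
  | mul _ _ hsr ih₁ ih₂ => exact hT.2.2.2 _ _ ih₁ ih₂ hsr

theorem isSubgroupoid_empty : IsSubgroupoid (∅ : Set G) :=
  ⟨fun _ h => h, fun _ h => h, fun _ h => h, fun _ _ h => h.elim⟩

@[simp]
theorem Gen_empty : Gen (∅ : Set G) = ∅ :=
  Set.subset_empty_iff.mp (isSubgroupoid_empty.Gen_subset subset_rfl)

@[simp]
theorem restrict_empty : restrict (∅ : Set G) = ∅ := by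
  ext
  simp [restrict]

end Subgroupoids

theorem isCompact_closure_of_isCompact_closure_inter {X : Type*} [TopologicalSpace X]
    [T2Space X] {E S : Set X} (hES : E ⊆ S) (h : IsCompact (closure E ∩ S)) :
    IsCompact (closure E) := by
  have hsub : closure E ⊆ closure E ∩ S :=
    closure_minimal (fun x hx => ⟨subset_closure hx, hES hx⟩) h.isClosed
  exact h.of_isClosed_subset isClosed_closure hsub

section DynamicAsymptoticDimension

variable {G : Type*} [GroupoidLike G] [TopologicalSpace G]

theorem dadLEOn.mono {S : Set G} {d d' : ℕ} (h : dadLEOn S d) (hdd : d ≤ d') :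
    dadLEOn S d' := by
  intro K hKS hKo hKc
  obtain ⟨U, hU, hcover, hcpt⟩ := h K hKS hKo hKc
  let U' : Fin (d' + 1) → Set G := fun i => if hi : (i : ℕ) < d + 1 then U ⟨i, hi⟩ else ∅
  refine ⟨U', fun i => ?_, hcover.trans fun x hx => ?_, fun i => ?_⟩
  · by_cases hi : (i : ℕ) < d + 1
    · simp only [U', dif_pos hi]
      exact hU _
    · simp only [U', dif_neg hi]
      exact ⟨⟨∅, isOpen_empty, (Set.empty_inter S).symm⟩, Set.empty_subset _⟩
  · obtain ⟨j, hj⟩ := Set.mem_iUnion.mp hx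
    exact Set.mem_iUnion.mpr ⟨Fin.castLE (by omega) j, by simp only [U', Fin.val_castLE, dif_pos j.2]; exact hj⟩
  · by_cases hi : (i : ℕ) < d + 1
    · simp only [U', dif_pos hi]
      exact hcpt _
    · simp only [U', dif_neg hi, restrict_empty, Set.inter_empty, Gen_empty, closure_empty,
        Set.empty_inter]
      exact isCompact_empty

theorem dadOn_le_of_dadLEOn {S : Set G} {d : ℕ} (h : dadLEOn S d) : dadOn S ≤ d :=
  sInf_le ⟨d, rfl, h⟩

theorem dadLEOn_of_dadOn_le {S : Set G} {d : ℕ} (h : dadOn S ≤ d) : dadLEOn S d := by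
  have hne : {e : ℕ∞ | ∃ d : ℕ, e = d ∧ dadLEOn S d}.Nonempty := by
    by_contra hempty
    rw [Set.not_nonempty_iff_eq_empty] at hempty
    simp [dadOn, hempty] at h
  obtain ⟨d', hd', hS⟩ := csInf_mem hne
  exact hS.mono (Nat.cast_le.mp (hd'.symm.trans_le h))

theorem dadLEOn_univ_of_local [T2Space G] {d : ℕ}
    (h : ∀ K : Set G, IsOpen K → IsCompact (closure K) →
      ∃ S, IsSubgroupoid S ∧ IsOpen S ∧ closure K ⊆ S ∧ dadLEOn S d) :
    dadLEOn (Set.univ : Set G) d := by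
  rintro K - ⟨O, hO, rfl⟩ hKc
  simp only [Set.inter_univ] at hKc ⊢
  obtain ⟨S, hS, hSo, hOS, hd⟩ := h O hO hKc
  have hOS' : O ⊆ S := subset_closure.trans hOS
  obtain ⟨U, hU, hcover, hcpt⟩ :=
    hd O hOS' ⟨O, hO, (Set.inter_eq_left.mpr hOS').symm⟩ (by rwa [Set.inter_eq_left.mpr hOS])
  refine ⟨U, fun i => ⟨?_, ?_⟩, hcover, fun i => ?_⟩
  · obtain ⟨V, hV, hUV⟩ := (hU i).1
    exact ⟨V ∩ S, hV.inter hSo, hUV⟩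
  · exact (hU i).2.trans Set.inter_subset_left
  · exact isCompact_closure_of_isCompact_closure_inter
      (hS.Gen_subset (Set.inter_subset_left.trans hOS')) (hcpt i)

end DynamicAsymptoticDimension

theorem stmt4_general {G : Type*} [TopologicalSpace G] [T2Space G] [GroupoidLike G]
    (Gn : ℕ → Set G) (hsub : ∀ n, IsSubgroupoid (Gn n)) (hopen : ∀ n, IsOpen (Gn n))
    (hmono : ∀ n, Gn n ⊆ Gn (n + 1))
    (hunion : (⋃ n, Gn n) = Set.univ) :
    dad G ≤ Filter.liminf (fun n => dadOn (Gn n)) Filter.atTop := by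
  induction h : Filter.liminf (fun n => dadOn (Gn n)) Filter.atTop using ENat.recTopCoe with
  | top => exact le_top
  | coe d =>
    have hfreq : ∃ᶠ n in Filter.atTop, dadLEOn (Gn n) d :=
      (Filter.frequently_lt_of_liminf_lt (b := (d : ℕ∞) + 1)
        (h := by rw [h]; exact ENat.lt_natCast_add_one_iff.mpr le_rfl)).mono fun _ hn =>
          dadLEOn_of_dadOn_le (ENat.lt_natCast_add_one_iff.mp hn)
    refine dadOn_le_of_dadLEOn (dadLEOn_univ_of_local fun K _ hKc => ?_)
    obtain ⟨m, hm⟩ := hKc.elim_directed_cover Gn hopen (hunion ▸ Set.subset_univ _)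
      (monotone_nat_of_le_succ hmono).directed_le
    obtain ⟨n, hmn, hn⟩ := Filter.frequently_atTop.mp hfreq m
    exact ⟨Gn n, hsub n, hopen n, hm.trans (monotone_nat_of_le_succ hmono hmn), hn⟩

/-- If an étale Hausdorff groupoid `G` is the union of a nested sequence of open
subgroupoids `Gₙ` with `closure (Gₙ) ⊆ G_{n+1}`, then
`dad G ≤ liminf dad (Gₙ)`. -/
theorem stmt4 {G : Type*} [TopologicalSpace G] [T2Space G] [GroupoidLike G]
    [EtaleGroupoid G]
    (Gn : ℕ → Set G) (hsub : ∀ n, IsSubgroupoid (Gn n)) (hopen : ∀ n, IsOpen (Gn n))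
    (hmono : ∀ n, Gn n ⊆ Gn (n + 1))
    (hnested : ∀ n, closure (Gn n) ⊆ Gn (n + 1))
    (hunion : (⋃ n, Gn n) = Set.univ) :
    dad G ≤ Filter.liminf (fun n => dadOn (Gn n)) Filter.atTop :=
  stmt4_general Gn hsub hopen hmono hunion
end

section
/- Let G be an étale Hausdorff groupoid, ψ : X → G⁰ a surjective local homeomorphism from a locally compact Hausdorff space X, and let G^ψ = {(x, g, y) ∈ X × G × X : ψ(x) = r(g), ψ(y) = s(g)} be the blow-up groupoid with multiplication (x,g,y)(y,h,z) = (x,gh,z). Then the dynamic asymptotic dimension of G^ψ equals the dynamic asymptotic dimension of G. -/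
open GroupoidLike

open GroupoidLike in
/-- The blow-up (ampliation) of `G` along a surjective local homeomorphism
`ψ : X → G⁰`. -/
def Blowup (G : Type*) [GroupoidLike G] {X : Type*} (ψ : X → G) : Type _ :=
  {p : X × G × X // ψ p.1 = rng p.2.1 ∧ ψ p.2.2 = src p.2.1}

instance {G : Type*} [TopologicalSpace G] [GroupoidLike G] {X : Type*}
    [TopologicalSpace X] (ψ : X → G) : TopologicalSpace (Blowup G ψ) := by
  unfold Blowup; infer_instance


/-!
The projection `π : G^ψ → G` is a homomorphism, and `x ↦ (x, ψ x, x)` identifies `X` with the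
unit space of `G^ψ`. Given a relatively compact open `K ⊆ G^ψ`, apply `dad G ≤ d` to a relatively
compact open neighbourhood of `π(K̄)` and pull the resulting cover back along `π`: the subgroupoid
generated by a piece of `K` maps into the corresponding relatively compact subgroupoid of `G`,
and its `X`-coordinates stay among those of `K̄`, so it lies in a compact set.

Conversely, given `K ⊆ G`, pick a relatively compact open `A ⊆ X` with `ψ(A)` containing the
units of `K̄` and apply `dad G^ψ ≤ d` to the lift `(A × K × A) ∩ G^ψ`; the resulting open sets of
units push forward along `ψ`. An element of a generated subgroupoid of `G` lifts factor by factor,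
through points of `A` over the intermediate units, into the corresponding subgroupoid of `G^ψ`,
hence lies in the compact `π`-image of its closure.
-/

open GroupoidLike EtaleGroupoid Topology
open Set hiding restrict

section Topology

variable {X Y : Type*} [TopologicalSpace X] [TopologicalSpace Y]

theorem IsOpenMap.exists_mem_nhds_subset_isCompact [LocallyCompactSpace X] {f : X → Y}
    (hf : IsOpenMap f) (hc : Continuous f) (x : X) {n : Set Y} (hn : n ∈ 𝓝 (f x)) :
    ∃ K ∈ 𝓝 (f x), K ⊆ n ∧ IsCompact K := by
  obtain ⟨M, hM, hMn, hMc⟩ := local_compact_nhds (hc.continuousAt hn)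
  exact ⟨f '' M, hf.image_mem_nhds hM, image_subset_iff.2 hMn, hMc.image hc⟩

theorem IsLocalHomeomorph.exists_isCompact_mem_nhds {f : X → Y} (hf : IsLocalHomeomorph f)
    (x : X) (h : ∀ n ∈ 𝓝 (f x), ∃ K ∈ 𝓝 (f x), K ⊆ n ∧ IsCompact K) :
    ∃ K, IsCompact K ∧ K ∈ 𝓝 x := by
  obtain ⟨e, hxe, rfl⟩ := hf x
  obtain ⟨K, hK, hKt, hKc⟩ := h _ (e.open_target.mem_nhds (e.map_source hxe))
  refine ⟨e.symm '' K, hKc.image_of_continuousOn (e.continuousOn_symm.mono hKt), ?_⟩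
  simpa only [e.left_inv hxe] using e.symm.image_mem_nhds (e.map_source hxe) hK

theorem IsOpenMap.exists_isCompact_subset_image_interior [WeaklyLocallyCompactSpace X]
    {f : X → Y} (hf : IsOpenMap f) {C : Set Y} (hC : IsCompact C) (hCf : C ⊆ range f) :
    ∃ K, IsCompact K ∧ C ⊆ f '' interior K := by
  obtain ⟨t, ht⟩ := hC.elim_finite_subcover
    (fun K : {K : Set X // IsCompact K} => f '' interior K.1) (fun K => hf _ isOpen_interior)
    (fun y hy => by
      obtain ⟨x, rfl⟩ := hCf hy
      obtain ⟨K, hK, hKx⟩ := exists_compact_mem_nhds x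
      exact mem_iUnion.2 ⟨⟨K, hK⟩, mem_image_of_mem f (mem_interior_iff_mem_nhds.2 hKx)⟩)
  refine ⟨⋃ K ∈ t, K.1, t.isCompact_biUnion fun K _ => K.2, ht.trans ?_⟩
  exact iUnion₂_subset fun K hK =>
    image_mono (interior_mono (subset_biUnion_of_mem (u := fun K => K.1) hK))

end Topology

section Groupoid

variable {H : Type*} [GroupoidLike H]

lemma mem_restrict {A : Set H} {g : H} : g ∈ restrict A ↔ src g ∈ A ∧ rng g ∈ A := Iff.rfl

lemma gen_mono {S T : Set H} (hST : S ⊆ T) {g : H} (hg : gen S g) : gen T g := by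
  induction hg with
  | base h => exact gen.base (hST h)
  | inv _ ih => exact gen.inv ih
  | mul _ _ hc ihg ihh => exact gen.mul ihg ihh hc

lemma gen_image {K : Type*} [GroupoidLike K] (f : H → K)
    (hsrc : ∀ p, f (src p) = src (f p)) (hrng : ∀ p, f (rng p) = rng (f p))
    (hinv : ∀ p, f (inv p) = inv (f p))
    (hmul : ∀ p q, src p = rng q → f (mul p q) = mul (f p) (f q))
    {S : Set H} {p : H} (hp : gen S p) : gen (f '' S) (f p) := by
  induction hp with
  | base h => exact gen.base (mem_image_of_mem f h)
  | inv _ ih => rw [hinv]; exact gen.inv ih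
  | mul _ _ hc ihg ihh =>
    rw [hmul _ _ hc]
    exact gen.mul ihg ihh (by rw [← hsrc, ← hrng, hc])

variable [TopologicalSpace H] [EtaleGroupoid H]

lemma units_eq_range_src : units H = range src :=
  Subset.antisymm (fun g hg => ⟨g, hg⟩) (by rintro _ ⟨g, rfl⟩; exact src_src (G := H) g)

lemma isOpen_units : IsOpen (units H) :=
  units_eq_range_src (H := H) ▸ (localHomeo_src (G := H)).isOpenMap.isOpen_range

lemma src_mem_units (g : H) : src g ∈ units H := src_src g

lemma rng_mem_units (g : H) : rng g ∈ units H := src_rng g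

lemma rng_eq_self_of_mem_units {u : H} (hu : u ∈ units H) : rng u = u := by
  rw [← show src u = u from hu, rng_src]

lemma mem_restrict_of_gen {S A : Set H} (hS : S ⊆ restrict A) {g : H} (hg : gen S g) :
    g ∈ restrict A := by
  induction hg with
  | base h => exact hS h
  | inv _ ih => rw [mem_restrict, src_inv, rng_inv]; exact ih.symm
  | mul _ _ hc ihg ihh =>
    rw [mem_restrict, src_mul _ _ hc, rng_mul _ _ hc]
    exact ⟨ihh.1, ihg.2⟩

lemma weaklyLocallyCompactSpace_of_range_eq_units {X : Type*} [TopologicalSpace X]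
    [LocallyCompactSpace X] {ψ : X → H} (hrange : range ψ = units H)
    (hψ : IsLocalHomeomorph ψ) : WeaklyLocallyCompactSpace H := by
  refine ⟨fun g => localHomeo_src.exists_isCompact_mem_nhds g fun n hn => ?_⟩
  obtain ⟨x, hx⟩ : src g ∈ range ψ := hrange ▸ src_mem_units g
  rw [← hx] at hn ⊢
  exact hψ.isOpenMap.exists_mem_nhds_subset_isCompact hψ.continuous x hn

end Groupoid

section DynamicAsymptoticDimension

variable {H : Type*} [TopologicalSpace H] [GroupoidLike H]

variable (H) in
def DadLE (d : ℕ) : Prop :=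
  ∀ K : Set H, IsOpen K → IsCompact (closure K) →
    ∃ U : Fin (d + 1) → Set H, (∀ i, IsOpen (U i) ∧ U i ⊆ units H) ∧
      src '' K ∪ rng '' K ⊆ ⋃ i, U i ∧
      ∀ i, IsCompact (closure (Gen (K ∩ restrict (U i))))

lemma dadLEOn_univ_iff {d : ℕ} : dadLEOn (univ : Set H) d ↔ DadLE H d := by
  simp [dadLEOn, DadLE]

lemma dad_eq_of_forall_dadLE_iff {H' : Type*} [TopologicalSpace H'] [GroupoidLike H']
    (h : ∀ d, DadLE H d ↔ DadLE H' d) : dad H = dad H' := by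
  simp only [dad, dadOn, dadLEOn_univ_iff, h]

end DynamicAsymptoticDimension

namespace Blowup

section Algebra

variable {G X : Type*} [GroupoidLike G] {ψ : X → G}

def left (p : Blowup G ψ) : X := p.1.1

def proj (p : Blowup G ψ) : G := p.1.2.1

def right (p : Blowup G ψ) : X := p.1.2.2

lemma apply_left (p : Blowup G ψ) : ψ p.left = rng p.proj := p.2.1

lemma apply_right (p : Blowup G ψ) : ψ p.right = src p.proj := p.2.2

def mk (x : X) (g : G) (y : X) (hx : ψ x = rng g) (hy : ψ y = src g) : Blowup G ψ :=
  ⟨(x, g, y), hx, hy⟩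

variable (ψ) in
structure CanonicalOps [GroupoidLike (Blowup G ψ)] : Prop where
  src_val : ∀ p : Blowup G ψ, (src p).1 = (p.right, src p.proj, p.right)
  rng_val : ∀ p : Blowup G ψ, (rng p).1 = (p.left, rng p.proj, p.left)
  inv_val : ∀ p : Blowup G ψ, (inv p).1 = (p.right, inv p.proj, p.left)
  mul_val : ∀ p q : Blowup G ψ, src p = rng q →
    (mul p q).1 = (p.left, mul p.proj q.proj, q.right)

def box (A : Set X) (C : Set G) (B : Set X) : Set (Blowup G ψ) :=
  Subtype.val ⁻¹' (A ×ˢ C ×ˢ B)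

lemma box_mono {A A' B B' : Set X} {C C' : Set G} (hA : A ⊆ A') (hC : C ⊆ C') (hB : B ⊆ B') :
    (box A C B : Set (Blowup G ψ)) ⊆ box A' C' B' :=
  preimage_mono (prod_mono hA (prod_mono hC hB))

def diag [TopologicalSpace G] [EtaleGroupoid G] (hψ : range ψ ⊆ units G) (x : X) :
    Blowup G ψ :=
  mk x (ψ x) x (rng_eq_self_of_mem_units (hψ (mem_range_self x))).symm
    (hψ (mem_range_self x)).symm

namespace CanonicalOps

variable [GroupoidLike (Blowup G ψ)]

lemma proj_src (hB : CanonicalOps ψ) (p : Blowup G ψ) : (src p).proj = src p.proj :=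
  congrArg (·.2.1) (hB.src_val p)

lemma proj_rng (hB : CanonicalOps ψ) (p : Blowup G ψ) : (rng p).proj = rng p.proj :=
  congrArg (·.2.1) (hB.rng_val p)

lemma proj_inv (hB : CanonicalOps ψ) (p : Blowup G ψ) : (inv p).proj = inv p.proj :=
  congrArg (·.2.1) (hB.inv_val p)

lemma proj_mul (hB : CanonicalOps ψ) {p q : Blowup G ψ} (h : src p = rng q) :
    (mul p q).proj = mul p.proj q.proj :=
  congrArg (·.2.1) (hB.mul_val p q h)

lemma gen_proj (hB : CanonicalOps ψ) {S : Set (Blowup G ψ)} {p : Blowup G ψ} (hp : gen S p) :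
    gen (proj '' S) p.proj :=
  gen_image proj hB.proj_src hB.proj_rng hB.proj_inv (fun _ _ => hB.proj_mul) hp

lemma ends_mem_of_gen (hB : CanonicalOps ψ) {S : Set (Blowup G ψ)} {p : Blowup G ψ}
    (hp : gen S p) :
    p.left ∈ left '' S ∪ right '' S ∧ p.right ∈ left '' S ∪ right '' S := by
  induction hp with
  | base h => exact ⟨Or.inl (mem_image_of_mem _ h), Or.inr (mem_image_of_mem _ h)⟩
  | @inv q _ ih =>
    rw [show (inv q).left = q.right from congrArg (·.1) (hB.inv_val q),
      show (inv q).right = q.left from congrArg (·.2.2) (hB.inv_val q)]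
    exact ih.symm
  | @mul q r _ _ hc ihq ihr =>
    rw [show (mul q r).left = q.left from congrArg (·.1) (hB.mul_val q r hc),
      show (mul q r).right = r.right from congrArg (·.2.2) (hB.mul_val q r hc)]
    exact ⟨ihq.1, ihr.2⟩

lemma gen_subset_box (hB : CanonicalOps ψ) (S : Set (Blowup G ψ)) :
    Gen S ⊆ box (left '' S ∪ right '' S) (Gen (proj '' S)) (left '' S ∪ right '' S) :=
  fun _ hp => ⟨(hB.ends_mem_of_gen hp).1, hB.gen_proj hp, (hB.ends_mem_of_gen hp).2⟩

variable [TopologicalSpace G] [EtaleGroupoid G]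

lemma src_eq_diag (hB : CanonicalOps ψ) (hψ : range ψ ⊆ units G) (p : Blowup G ψ) :
    src p = diag hψ p.right :=
  Subtype.ext ((hB.src_val p).trans (by rw [← apply_right]; rfl))

lemma rng_eq_diag (hB : CanonicalOps ψ) (hψ : range ψ ⊆ units G) (p : Blowup G ψ) :
    rng p = diag hψ p.left :=
  Subtype.ext ((hB.rng_val p).trans (by rw [← apply_left]; rfl))

/-- The lift `(x, g, y)` of a product `g = g₁ g₂` factors as `(x, g₁, z)(z, g₂, y)` for any
`z ∈ V` over the middle unit `s(g₁)`. -/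
lemma gen_of_gen_proj (hB : CanonicalOps ψ) (hψ : range ψ ⊆ units G) {V : Set X} {S : Set G}
    {T : Set (Blowup G ψ)} (hSV : S ⊆ restrict (ψ '' V))
    (hT : ∀ p : Blowup G ψ, p.proj ∈ S → p.left ∈ V → p.right ∈ V → p ∈ T) {g : G}
    (hg : gen S g) :
    ∀ p : Blowup G ψ, p.proj = g → p.left ∈ V → p.right ∈ V → gen T p := by
  induction hg with
  | base hgS =>
    rintro p rfl hl hr
    exact gen.base (hT p hgS hl hr)
  | @inv g _ ih =>
    intro p hp hl hr
    let q : Blowup G ψ := Blowup.mk p.right g p.left (by rw [p.apply_right, hp, src_inv])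
      (by rw [p.apply_left, hp, rng_inv])
    have hpq : p = inv q :=
      Subtype.ext (by rw [hB.inv_val]; exact congrArg (p.left, ·, p.right) hp)
    exact hpq ▸ gen.inv (ih q rfl hr hl)
  | @mul g h hg _ hc ihg ihh =>
    intro p hp hl hr
    obtain ⟨z, hzV, hz⟩ := (mem_restrict_of_gen hSV hg).1
    let q₁ : Blowup G ψ := Blowup.mk p.left g z (by rw [p.apply_left, hp, rng_mul _ _ hc]) hz
    let q₂ : Blowup G ψ :=
      Blowup.mk z h p.right (hz.trans hc) (by rw [p.apply_right, hp, src_mul _ _ hc])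
    have hq : src q₁ = rng q₂ := (hB.src_eq_diag hψ q₁).trans (hB.rng_eq_diag hψ q₂).symm
    have hpq : p = mul q₁ q₂ :=
      Subtype.ext (by rw [hB.mul_val _ _ hq]; exact congrArg (p.left, ·, p.right) hp)
    exact hpq ▸ gen.mul (ihg q₁ rfl hl hzV) (ihh q₂ rfl hzV hr) hq

lemma gen_subset_image_proj (hB : CanonicalOps ψ) (hψ : range ψ ⊆ units G) {V : Set X}
    {S : Set G} {T : Set (Blowup G ψ)} (hSV : S ⊆ restrict (ψ '' V))
    (hT : ∀ p : Blowup G ψ, p.proj ∈ S → p.left ∈ V → p.right ∈ V → p ∈ T) :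
    Gen S ⊆ proj '' Gen T := by
  intro g hg
  obtain ⟨⟨y, hyV, hy⟩, ⟨x, hxV, hx⟩⟩ := mem_restrict_of_gen hSV hg
  exact ⟨Blowup.mk x g y hx hy, hB.gen_of_gen_proj hψ hSV hT hg _ rfl hxV hyV, rfl⟩

end CanonicalOps

end Algebra

section Topology

variable {G X : Type*} [TopologicalSpace G] [GroupoidLike G] [TopologicalSpace X] {ψ : X → G}

instance [T2Space X] [T2Space G] : T2Space (Blowup G ψ) :=
  inferInstanceAs (T2Space {p : X × G × X // ψ p.1 = rng p.2.1 ∧ ψ p.2.2 = src p.2.1})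

lemma continuous_left : Continuous (left : Blowup G ψ → X) :=
  continuous_fst.comp continuous_subtype_val

lemma continuous_proj : Continuous (proj : Blowup G ψ → G) :=
  continuous_fst.comp (continuous_snd.comp continuous_subtype_val)

lemma continuous_right : Continuous (right : Blowup G ψ → X) :=
  continuous_snd.comp (continuous_snd.comp continuous_subtype_val)

lemma continuous_diag [EtaleGroupoid G] (hψ : range ψ ⊆ units G) (hψc : Continuous ψ) :
    Continuous (diag hψ) :=
  continuous_id.prodMk (hψc.prodMk continuous_id) |>.subtype_mk _

lemma isOpen_box {A B : Set X} {C : Set G} (hA : IsOpen A) (hC : IsOpen C) (hB : IsOpen B) :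
    IsOpen (box A C B : Set (Blowup G ψ)) :=
  (hA.prod (hC.prod hB)).preimage continuous_subtype_val

lemma isCompact_box [T2Space G] [EtaleGroupoid G] (hψ : Continuous ψ) {A B : Set X}
    {C : Set G} (hA : IsCompact A) (hC : IsCompact C) (hB : IsCompact B) :
    IsCompact (box A C B : Set (Blowup G ψ)) := by
  refine (IsClosedEmbedding.subtypeVal ?_).isCompact_preimage (hA.prod (hC.prod hB))
  exact (isClosed_eq (hψ.comp continuous_fst)
      (cont_rng.comp (continuous_fst.comp continuous_snd))).inter
    (isClosed_eq (hψ.comp (continuous_snd.comp continuous_snd))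
      (cont_src.comp (continuous_fst.comp continuous_snd)))

end Topology

end Blowup

namespace Blowup.CanonicalOps

variable {G X : Type*} [TopologicalSpace G] [T2Space G] [GroupoidLike G] [EtaleGroupoid G]
  [TopologicalSpace X] [T2Space X] {ψ : X → G} [GroupoidLike (Blowup G ψ)]

theorem dadLE_blowup_of_dadLE [WeaklyLocallyCompactSpace G] [EtaleGroupoid (Blowup G ψ)]
    (hB : CanonicalOps ψ) (hψ : Continuous ψ) {d : ℕ} (h : DadLE G d) :
    DadLE (Blowup G ψ) d := by
  intro K hK hKc
  obtain ⟨L', hL'c, hKL'⟩ := exists_compact_superset (hKc.image continuous_proj)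
  obtain ⟨U, hU, hcover, hUc⟩ :=
    h (interior L') isOpen_interior (hL'c.closure_of_subset interior_subset)
  have hKL : ∀ q ∈ K, q.proj ∈ interior L' := fun q hq =>
    hKL' (mem_image_of_mem _ (subset_closure hq))
  refine ⟨fun i => proj ⁻¹' U i ∩ units _, fun i =>
    ⟨((hU i).1.preimage continuous_proj).inter isOpen_units, inter_subset_right⟩,
    ?_, fun i => ?_⟩
  · rintro _ (⟨q, hq, rfl⟩ | ⟨q, hq, rfl⟩)
    · obtain ⟨i, hi⟩ := mem_iUnion.1 (hcover (Or.inl (mem_image_of_mem src (hKL q hq))))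
      exact mem_iUnion.2 ⟨i, by rw [mem_preimage, hB.proj_src]; exact hi, src_mem_units q⟩
    · obtain ⟨i, hi⟩ := mem_iUnion.1 (hcover (Or.inr (mem_image_of_mem rng (hKL q hq))))
      exact mem_iUnion.2 ⟨i, by rw [mem_preimage, hB.proj_rng]; exact hi, rng_mem_units q⟩
  set S := K ∩ restrict (proj ⁻¹' U i ∩ units _)
  set E := left '' closure K ∪ right '' closure K
  have hE : IsCompact E :=
    (hKc.image continuous_left).union (hKc.image continuous_right)
  have hSE : left '' S ∪ right '' S ⊆ E :=
    union_subset_union (image_mono (inter_subset_left.trans subset_closure))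
      (image_mono (inter_subset_left.trans subset_closure))
  have hSU : proj '' S ⊆ interior L' ∩ restrict (U i) := by
    rintro _ ⟨q, ⟨hqK, hqs, hqr⟩, rfl⟩
    exact ⟨hKL q hqK, hB.proj_src q ▸ hqs.1, hB.proj_rng q ▸ hqr.1⟩
  refine (isCompact_box hψ hE (hUc i) hE).closure_of_subset ((hB.gen_subset_box S).trans ?_)
  exact box_mono hSE (fun g hg => subset_closure (gen_mono hSU hg)) hSE

theorem dadLE_of_dadLE_blowup [WeaklyLocallyCompactSpace X] (hB : CanonicalOps ψ)
    (hrange : range ψ = units G) (hψ : IsLocalHomeomorph ψ) {d : ℕ}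
    (h : DadLE (Blowup G ψ) d) : DadLE G d := by
  intro K hK hKc
  have hC : IsCompact (src '' closure K ∪ rng '' closure K) :=
    (hKc.image cont_src).union (hKc.image cont_rng)
  have hCψ : src '' closure K ∪ rng '' closure K ⊆ range ψ := by
    rw [hrange]
    rintro _ (⟨g, -, rfl⟩ | ⟨g, -, rfl⟩)
    exacts [src_mem_units g, rng_mem_units g]
  obtain ⟨A', hA'c, hCA⟩ := hψ.isOpenMap.exists_isCompact_subset_image_interior hC hCψ
  set A := interior A'
  obtain ⟨W, hW, hcover, hWc⟩ := h (box A K A) (isOpen_box isOpen_interior hK isOpen_interior)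
    ((isCompact_box hψ.continuous hA'c hKc hA'c).closure_of_subset
      (box_mono interior_subset subset_closure interior_subset))
  have hlift : ∀ g ∈ K, ∃ p ∈ (box A K A : Set (Blowup G ψ)), p.proj = g := by
    intro g hg
    obtain ⟨y, hyA, hy⟩ := hCA (Or.inl (mem_image_of_mem src (subset_closure hg)))
    obtain ⟨x, hxA, hx⟩ := hCA (Or.inr (mem_image_of_mem rng (subset_closure hg)))
    exact ⟨Blowup.mk x g y hx hy, ⟨hxA, hg, hyA⟩, rfl⟩
  set V := fun i => A ∩ diag hrange.subset ⁻¹' W i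
  refine ⟨fun i => ψ '' V i, fun i => ⟨hψ.isOpenMap _ (isOpen_interior.inter
      ((hW i).1.preimage (continuous_diag _ hψ.continuous))),
    hrange ▸ image_subset_range _ _⟩, ?_, fun i => ?_⟩
  · rintro _ (⟨g, hg, rfl⟩ | ⟨g, hg, rfl⟩) <;> obtain ⟨p, hp, rfl⟩ := hlift g hg
    · obtain ⟨i, hi⟩ := mem_iUnion.1 (hcover (Or.inl (mem_image_of_mem src hp)))
      rw [hB.src_eq_diag hrange.subset] at hi
      exact mem_iUnion.2 ⟨i, p.right, ⟨hp.2.2, hi⟩, p.apply_right⟩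
    · obtain ⟨i, hi⟩ := mem_iUnion.1 (hcover (Or.inr (mem_image_of_mem rng hp)))
      rw [hB.rng_eq_diag hrange.subset] at hi
      exact mem_iUnion.2 ⟨i, p.left, ⟨hp.1, hi⟩, p.apply_left⟩
  have hT : ∀ p : Blowup G ψ, p.proj ∈ K ∩ restrict (ψ '' V i) → p.left ∈ V i →
      p.right ∈ V i → p ∈ box A K A ∩ restrict (W i) := fun p hp hl hr =>
    ⟨⟨hl.1, hp.1, hr.1⟩, hB.src_eq_diag hrange.subset p ▸ hr.2,
      hB.rng_eq_diag hrange.subset p ▸ hl.2⟩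
  exact ((hWc i).image continuous_proj).closure_of_subset
    ((hB.gen_subset_image_proj hrange.subset inter_subset_right hT).trans
      (image_mono subset_closure))

end Blowup.CanonicalOps

open GroupoidLike in
/-- Morita invariance via blow-ups: if `ψ : X → G⁰` is a surjective local homeomorphism
from a locally compact Hausdorff space, then the blow-up groupoid
`G^ψ = {(x,g,y) : ψ(x) = r(g), ψ(y) = s(g)}`, with multiplication
`(x,g,y)(y,h,z) = (x,gh,z)`, has the same dynamic asymptotic dimension as `G`. -/
theorem stmt6 {G X : Type*} [TopologicalSpace G] [T2Space G] [GroupoidLike G]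
    [EtaleGroupoid G] [TopologicalSpace X] [T2Space X] [LocallyCompactSpace X]
    (ψ : X → G) (hrange : Set.range ψ = units G) (hψ : IsLocalHomeomorph ψ)
    [GroupoidLike (Blowup G ψ)] [EtaleGroupoid (Blowup G ψ)]
    (hsrc : ∀ p : Blowup G ψ, (src p).1 = (p.1.2.2, src p.1.2.1, p.1.2.2))
    (hrng : ∀ p : Blowup G ψ, (rng p).1 = (p.1.1, rng p.1.2.1, p.1.1))
    (hinv : ∀ p : Blowup G ψ,
      (GroupoidLike.inv p).1 = (p.1.2.2, GroupoidLike.inv p.1.2.1, p.1.1))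
    (hmul : ∀ p q : Blowup G ψ, src p = rng q →
      (GroupoidLike.mul p q).1 = (p.1.1, GroupoidLike.mul p.1.2.1 q.1.2.1, q.1.2.2)) :
    dad (Blowup G ψ) = dad G := by
  have hB : Blowup.CanonicalOps ψ := ⟨hsrc, hrng, hinv, hmul⟩
  have := weaklyLocallyCompactSpace_of_range_eq_units hrange hψ
  exact dad_eq_of_forall_dadLE_iff fun d =>
    ⟨hB.dadLE_of_dadLE_blowup hrange hψ, hB.dadLE_blowup_of_dadLE hψ.continuous⟩
end

section
/- Let H be a compact principal ample (étale, totally disconnected) groupoid. Then there exists a clopen subset Y_* ⊆ H⁰ meeting each H-orbit in H⁰ exactly once (a clopen fundamental domain). -/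
open GroupoidLike

set_option linter.unusedSectionVars false
section Aux
open GroupoidLike EtaleGroupoid

variable {H : Type*} [TopologicalSpace H] [T2Space H] [CompactSpace H]
    [TotallyDisconnectedSpace H] [GroupoidLike H] [EtaleGroupoid H]

/-- the orbit relation -/
def OrbRel (x y : H) : Prop := ∃ g : H, src g = x ∧ rng g = y

lemma orel_refl {x : H} (hx : x ∈ units H) : OrbRel x x :=
  ⟨x, hx, by rw [show rng x = rng (src x) by rw [hx], rng_src, hx]⟩

lemma orel_symm {x y : H} : OrbRel x y → OrbRel y x := by
  rintro ⟨g, rfl, rfl⟩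
  exact ⟨inv g, src_inv g, rng_inv g⟩

lemma orel_trans {x y z : H} : OrbRel x y → OrbRel y z → OrbRel x z := by
  rintro ⟨g, rfl, rfl⟩ ⟨h, hs, rfl⟩
  exact ⟨mul h g, by rw [src_mul h g hs], by rw [rng_mul h g hs]⟩

lemma units_isClopen : IsClopen (units H) := by
  constructor
  · exact isClosed_eq cont_src continuous_id
  · rw [isOpen_iff_forall_mem_open]
    intro u hu
    obtain ⟨e, he, hfe⟩ := localHomeo_src (G := H) u
    refine ⟨e.source ∩ src ⁻¹' e.source, fun g hg => ?_, ?_, ?_⟩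
    · have key : e g = e (src g) := by
        rw [← hfe, src_src]
      have : g = src g := e.injOn hg.1 hg.2 key
      exact this.symm
    · exact e.open_source.inter (cont_src.isOpen_preimage _ e.open_source)
    · refine ⟨he, ?_⟩
      have hu' : src u = u := hu
      show src u ∈ e.source
      rw [hu']; exact he

/-- saturation of a set -/
def Sat (V : Set H) : Set H := rng '' (src ⁻¹' V)

lemma mem_Sat {V : Set H} {y : H} : y ∈ Sat V ↔ ∃ v ∈ V, OrbRel v y := by
  constructor
  · rintro ⟨g, hg, rfl⟩
    exact ⟨src g, hg, ⟨g, rfl, rfl⟩⟩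
  · rintro ⟨v, hv, g, rfl, rfl⟩
    exact ⟨g, hv, rfl⟩

lemma sat_isClopen {V : Set H} (h : IsClopen V) : IsClopen (Sat V) := by
  have hpre : IsClosed (src ⁻¹' V) := h.isClosed.preimage cont_src
  constructor
  · exact ((hpre.isCompact.image cont_rng).isClosed)
  · exact (localHomeo_rng (G := H)).isOpenMap _ (h.isOpen.preimage cont_src)

lemma subset_sat {V : Set H} (hV : V ⊆ units H) : V ⊆ Sat V :=
  fun v hv => mem_Sat.2 ⟨v, hv, orel_refl (hV hv)⟩

lemma exists_good_nbhd (hprincipal : ∀ g : H, src g = rng g → g ∈ units H)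
    {x : H} (hx : x ∈ units H) :
    ∃ V : Set H, IsClopen V ∧ x ∈ V ∧ V ⊆ units H ∧
      ∀ y ∈ V, ∀ y' ∈ V, OrbRel y y' → y = y' := by
  have hKc : IsCompact ((units H)ᶜ) :=
    (units_isClopen.2.isClosed_compl).isCompact
  set ι := { s : Set H // IsClopen s ∧ x ∈ s }
  have hZcl : ∀ i : ι, IsClosed {g : H | src g ∈ (i : Set H) ∧ rng g ∈ (i : Set H)} :=
    fun i => ((i.2.1.isClosed.preimage cont_src).inter (i.2.1.isClosed.preimage cont_rng))
  have hempty : (units H)ᶜ ∩ ⋂ i : ι, {g : H | src g ∈ (i : Set H) ∧ rng g ∈ (i : Set H)} = ∅ := by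
    rw [Set.eq_empty_iff_forall_notMem]
    rintro g ⟨hg, hgi⟩
    rw [Set.mem_iInter] at hgi
    have hcc := (connectedComponent_eq_iInter_isClopen x).symm
    have hsrc : src g ∈ connectedComponent x := by
      rw [connectedComponent_eq_iInter_isClopen x, Set.mem_iInter]
      exact fun i => (hgi i).1
    have hrng : rng g ∈ connectedComponent x := by
      rw [connectedComponent_eq_iInter_isClopen x, Set.mem_iInter]
      exact fun i => (hgi i).2
    rw [totallyDisconnectedSpace_iff_connectedComponent_singleton.1 ‹_› x,
      Set.mem_singleton_iff] at hsrc hrng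
    exact hg (hprincipal g (hsrc.trans hrng.symm))
  obtain ⟨t, ht⟩ := hKc.elim_finite_subfamily_closed _ hZcl hempty
  refine ⟨(⋂ i ∈ t, (i : Set H)) ∩ units H,
    (isClopen_biInter_finset (fun i _ => i.2.1)).inter units_isClopen, ?_, Set.inter_subset_right, ?_⟩
  · exact ⟨Set.mem_biInter (fun i _ => i.2.2), hx⟩
  · rintro y ⟨hy, hyu⟩ y' ⟨hy', _⟩ ⟨g, rfl, rfl⟩
    have hgu : g ∈ units H := by
      by_contra hg
      have : g ∈ (units H)ᶜ ∩ ⋂ i ∈ t, {g : H | src g ∈ (i : Set H) ∧ rng g ∈ (i : Set H)} := by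
        refine ⟨hg, Set.mem_biInter fun i hi => ?_⟩
        rw [Set.mem_iInter₂] at hy hy'
        exact ⟨hy i hi, hy' i hi⟩
      rw [ht] at this
      exact this
    have h1 : src g = g := hgu
    rw [show rng g = rng (src g) by rw [h1], rng_src]

lemma buildY (l : List (Set H))
    (hP : ∀ W ∈ l, IsClopen W ∧ W ⊆ units H ∧ ∀ y ∈ W, ∀ y' ∈ W, OrbRel y y' → y = y') :
    ∃ Y : Set H, IsClopen Y ∧ Y ⊆ units H ∧
      (∀ y ∈ Y, ∀ y' ∈ Y, OrbRel y y' → y = y') ∧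
      (∀ y ∈ Y, ∃ W ∈ l, ∃ v ∈ W, OrbRel y v) ∧
      (∀ x : H, (∃ W ∈ l, ∃ v ∈ W, OrbRel x v) → ∃ y ∈ Y, OrbRel x y) := by
  induction l with
  | nil => exact ⟨∅, isClopen_empty, by simp, by simp, by simp, by simp⟩
  | cons V l ih =>
    obtain ⟨Y, hYc, hYu, hYinj, hYrel, hYcov⟩ := ih (fun W hW => hP W (List.mem_cons_of_mem _ hW))
    obtain ⟨hVc, hVu, hVinj⟩ := hP V List.mem_cons_self
    set S : Set H := ⋃ W ∈ {W | W ∈ l}, Sat W with hS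
    have hSc : IsClopen S :=
      (List.finite_toSet l).isClopen_biUnion (fun W hW => sat_isClopen (hP W (List.mem_cons_of_mem _ hW)).1)
    have hmemS : ∀ z : H, z ∈ S ↔ ∃ W ∈ l, ∃ w ∈ W, OrbRel w z := by
      intro z
      simp only [hS, Set.mem_iUnion, Set.mem_setOf_eq, exists_prop]
      constructor
      · rintro ⟨W, hW, hz⟩; exact ⟨W, hW, mem_Sat.1 hz⟩
      · rintro ⟨W, hW, hz⟩; exact ⟨W, hW, mem_Sat.2 hz⟩
    refine ⟨(V \ S) ∪ Y, (hVc.diff hSc).union hYc, ?_, ?_, ?_, ?_⟩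
    · rintro y (⟨hy, -⟩ | hy)
      · exact hVu hy
      · exact hYu hy
    · rintro y (⟨hy, hyS⟩ | hy) y' (⟨hy'1, hy'2⟩ | hy') hrel
      · exact hVinj y hy y' hy'1 hrel
      · obtain ⟨W, hW, v, hv, hrv⟩ := hYrel y' hy'
        exact absurd ((hmemS y).2 ⟨W, hW, v, hv, orel_symm (orel_trans hrel hrv)⟩) hyS
      · obtain ⟨W, hW, v, hv, hrv⟩ := hYrel y hy
        exact absurd ((hmemS y').2 ⟨W, hW, v, hv, orel_symm (orel_trans (orel_symm hrel) hrv)⟩) hy'2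
      · exact hYinj y hy y' hy' hrel
    · rintro y (⟨hy, -⟩ | hy)
      · exact ⟨V, List.mem_cons_self, y, hy, orel_refl (hVu hy)⟩
      · obtain ⟨W, hW, v, hv, hrv⟩ := hYrel y hy
        exact ⟨W, List.mem_cons_of_mem _ hW, v, hv, hrv⟩
    · rintro x ⟨W, hW, v, hv, hxv⟩
      rcases List.mem_cons.1 hW with rfl | hW
      · by_cases hvS : v ∈ S
        · obtain ⟨W', hW', w, hw, hwv⟩ := (hmemS v).1 hvS
          obtain ⟨y, hy, hxy⟩ := hYcov x ⟨W', hW', w, hw, orel_trans hxv (orel_symm hwv)⟩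
          exact ⟨y, Or.inr hy, hxy⟩
        · exact ⟨v, Or.inl ⟨hv, hvS⟩, hxv⟩
      · obtain ⟨y, hy, hxy⟩ := hYcov x ⟨W, hW, v, hv, hxv⟩
        exact ⟨y, Or.inr hy, hxy⟩

end Aux

open GroupoidLike in
/-- A compact principal ample groupoid `H` admits a clopen fundamental domain: a clopen
`Y ⊆ H⁰` meeting each orbit in `H⁰` exactly once. -/
theorem stmt15 {H : Type*} [TopologicalSpace H] [T2Space H] [CompactSpace H]
    [TotallyDisconnectedSpace H] [GroupoidLike H] [EtaleGroupoid H]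
    (hprincipal : ∀ g : H, src g = rng g → g ∈ units H) :
    ∃ Y : Set H, IsClopen Y ∧ Y ⊆ units H ∧
      ∀ x ∈ units H, ∃! y : H, y ∈ Y ∧ ∃ g : H, src g = x ∧ rng g = y := by
  
  classical
  choose V hVc hVx hVu hVinj using
    (fun x : units H => exists_good_nbhd hprincipal x.2)
  have hXc : IsCompact (units H) := units_isClopen.isClosed.isCompact
  have hcov : units H ⊆ ⋃ i : units H, Sat (V i) := fun x hx =>
    Set.mem_iUnion.2 ⟨⟨x, hx⟩, subset_sat (hVu _) (hVx _)⟩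
  obtain ⟨t, ht⟩ := hXc.elim_finite_subcover _ (fun i => (sat_isClopen (hVc i)).2) hcov
  set l : List (Set H) := t.toList.map V with hl
  have hP : ∀ W ∈ l, IsClopen W ∧ W ⊆ units H ∧
      ∀ y ∈ W, ∀ y' ∈ W, OrbRel y y' → y = y' := by
    intro W hW
    simp only [hl, List.mem_map, Finset.mem_toList] at hW
    obtain ⟨i, -, rfl⟩ := hW
    exact ⟨hVc i, hVu i, hVinj i⟩
  obtain ⟨Y, hYc, hYu, hYinj, -, hYcov⟩ := buildY l hP
  refine ⟨Y, hYc, hYu, fun x hx => ?_⟩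
  have hx' : ∃ W ∈ l, ∃ v ∈ W, OrbRel x v := by
    obtain ⟨i, hi, hxi⟩ := Set.mem_iUnion₂.1 (ht hx)
    obtain ⟨v, hv, hvx⟩ := mem_Sat.1 hxi
    refine ⟨V i, ?_, v, hv, orel_symm hvx⟩
    simp only [hl, List.mem_map, Finset.mem_toList]
    exact ⟨i, hi, rfl⟩
  obtain ⟨y, hy, hxy⟩ := hYcov x hx'
  refine ⟨y, ⟨hy, hxy⟩, ?_⟩
  rintro y' ⟨hy', hxy'⟩
  exact hYinj y' hy' y hy (orel_trans (orel_symm hxy') hxy)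
end
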